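/- Conformal invariance of the quadratic teleparallel Lagrangian: define ‖T^ax‖² := g^{αα′} g^{ββ′} g^{γγ′} T^ax_{αβγ} T^ax_{α′β′γ′} and the density of the 4-form L(ϑ,s) := s·‖T^ax‖²·∗1 as s·‖T^ax‖²·det(ϑ^j_α). For every continuously differentiable coframe ϑ on U, every continuously differentiable s : U → (0,∞) and every continuously differentiable h : U → ℝ, replacing ϑ^j by e^h ϑ^j (hence g_{αβ} by e^{2h} g_{αβ}) and s by e^{−2h} s leaves this density unchanged at every point of U. -/

import Mathlib

noncomputable section

open scoped Matrix

/-- Points of ℝ⁴. -/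
abbrev Pt : Type := Fin 4 → ℝ

/-- Partial derivative ∂_α of a function on ℝ⁴. -/
def pd {E : Type*} [NormedAddCommGroup E] [NormedSpace ℝ E]
    (α : Fin 4) (f : Pt → E) (x : Pt) : E :=
  fderiv ℝ f x (Pi.single α 1)

/-- o_{jk} = o^{jk} = diag(1,-1,-1,-1). -/
def oM : Fin 4 → Fin 4 → ℝ := fun j k => if j = k then (if j = 0 then 1 else -1) else 0

/-- Totally antisymmetric symbol, ε_{0123} = 1. -/
def eps (a b c d : Fin 4) : ℝ :=
  ∑ σ : Equiv.Perm (Fin 4),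
    if σ 0 = a ∧ σ 1 = b ∧ σ 2 = c ∧ σ 3 = d then ((Equiv.Perm.sign σ : ℤ) : ℝ) else 0

/-- Determinant det(ϑ^j_α) of a coframe. -/
def cofDet (ϑ : Fin 4 → Pt → Fin 4 → ℝ) (x : Pt) : ℝ :=
  Matrix.det (Matrix.of fun j α => ϑ j x α)

/-- l := ϑ⁰ + ϑ³. -/
def lC (ϑ : Fin 4 → Pt → Fin 4 → ℝ) (x : Pt) (α : Fin 4) : ℂ :=
  (ϑ 0 x α : ℂ) + (ϑ 3 x α : ℂ)

/-- m := ϑ¹ + iϑ². -/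
def mC (ϑ : Fin 4 → Pt → Fin 4 → ℝ) (x : Pt) (α : Fin 4) : ℂ :=
  (ϑ 1 x α : ℂ) + Complex.I * (ϑ 2 x α : ℂ)

/-- n := ϑ⁰ - ϑ³. -/
def nC (ϑ : Fin 4 → Pt → Fin 4 → ℝ) (x : Pt) (α : Fin 4) : ℂ :=
  (ϑ 0 x α : ℂ) - (ϑ 3 x α : ℂ)

/-- The teleparallel Lagrangian density
λ(l,m,n) := (1/6) ε^{αβγδ} l_α (n_β ∂_γ l_δ − m̄_β ∂_γ m_δ − m_β ∂_γ m̄_δ). -/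
def lam (l m n : Pt → Fin 4 → ℂ) (x : Pt) : ℂ :=
  (1/6 : ℂ) * ∑ α : Fin 4, ∑ β : Fin 4, ∑ γ : Fin 4, ∑ δ : Fin 4,
    (eps α β γ δ : ℂ) * l x α *
      (n x β * pd γ (fun y => l y δ) x
        - (starRingEnd ℂ) (m x β) * pd γ (fun y => m y δ) x
        - m x β * pd γ (fun y => (starRingEnd ℂ) (m y δ)) x)

/-- (du)_{αβ} := ∂_α u_β − ∂_β u_α. -/
def dcov (u : Pt → Fin 4 → ℝ) (α β : Fin 4) (x : Pt) : ℝ :=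
  pd α (fun y => u y β) x - pd β (fun y => u y α) x

/-- Axial torsion T^ax(ϑ)_{αβγ}. -/
def Tax (ϑ : Fin 4 → Pt → Fin 4 → ℝ) (α β γ : Fin 4) (x : Pt) : ℝ :=
  (1/3 : ℝ) * ∑ j : Fin 4, ∑ k : Fin 4, oM j k *
    (ϑ j x α * dcov (ϑ k) β γ x + ϑ j x β * dcov (ϑ k) γ α x + ϑ j x γ * dcov (ϑ k) α β x)

/-- Metric g_{αβ} := o_{jk} ϑ^j_α ϑ^k_β. -/
def gmat (ϑ : Fin 4 → Pt → Fin 4 → ℝ) (x : Pt) : Matrix (Fin 4) (Fin 4) ℝ :=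
  Matrix.of fun α β => ∑ j : Fin 4, ∑ k : Fin 4, oM j k * ϑ j x α * ϑ k x β

/-- Inverse metric g^{αβ}. -/
def ginv (ϑ : Fin 4 → Pt → Fin 4 → ℝ) (x : Pt) : Matrix (Fin 4) (Fin 4) ℝ :=
  (gmat ϑ x)⁻¹

/-- Christoffel symbols Γ^β_{αγ}. -/
def Chr (ϑ : Fin 4 → Pt → Fin 4 → ℝ) (β α γ : Fin 4) (x : Pt) : ℝ :=
  (1/2 : ℝ) * ∑ δ : Fin 4, ginv ϑ x β δ *
    (pd α (fun y => gmat ϑ y γ δ) x + pd γ (fun y => gmat ϑ y α δ) x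
      - pd δ (fun y => gmat ϑ y α γ) x)

/-- Levi-Civita covariant derivative ∇_α u_β of a complex covector field. -/
def covC (ϑ : Fin 4 → Pt → Fin 4 → ℝ) (u : Pt → Fin 4 → ℂ) (α β : Fin 4) (x : Pt) : ℂ :=
  pd α (fun y => u y β) x - ∑ γ : Fin 4, (Chr ϑ γ α β x : ℂ) * u x γ

/-- Levi-Civita covariant derivative ∇_γ F_{αβ} of a complex 2-form. -/
def covF (ϑ : Fin 4 → Pt → Fin 4 → ℝ) (F : Pt → Fin 4 → Fin 4 → ℂ) (γ α β : Fin 4) (x : Pt) : ℂ :=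
  pd γ (fun y => F y α β) x - ∑ δ : Fin 4, (Chr ϑ δ γ α x : ℂ) * F x δ β
    - ∑ δ : Fin 4, (Chr ϑ δ γ β x : ℂ) * F x α δ

/-- The 2-form (l∧m)_{αβ}. -/
def lmForm (ϑ : Fin 4 → Pt → Fin 4 → ℝ) (x : Pt) (α β : Fin 4) : ℂ :=
  lC ϑ x α * mC ϑ x β - lC ϑ x β * mC ϑ x α

/-- The Griffiths–Newing covector v_α := ∇^β (l∧m)_{αβ} − m^β ∇_α l_β. -/
def vGN (ϑ : Fin 4 → Pt → Fin 4 → ℝ) (α : Fin 4) (x : Pt) : ℂ :=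
  (∑ β : Fin 4, ∑ γ : Fin 4, (ginv ϑ x β γ : ℂ) * covF ϑ (fun y a b => lmForm ϑ y a b) γ α β x)
  - ∑ β : Fin 4, ∑ γ : Fin 4, (ginv ϑ x β γ : ℂ) * mC ϑ x γ * covC ϑ (fun y b => lC ϑ y b) α β x

/-- l^α := g^{αβ} l_β. -/
def lup (ϑ : Fin 4 → Pt → Fin 4 → ℝ) (x : Pt) (α : Fin 4) : ℂ :=
  ∑ β : Fin 4, (ginv ϑ x α β : ℂ) * lC ϑ x β

/-- Divergence ∇_α l^α := ∂_α l^α + Γ^α_{αγ} l^γ. -/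
def divl (ϑ : Fin 4 → Pt → Fin 4 → ℝ) (x : Pt) : ℂ :=
  ∑ α : Fin 4, (pd α (fun y => lup ϑ y α) x
    + ∑ γ : Fin 4, (Chr ϑ α α γ x : ℂ) * lup ϑ x γ)

/-- Components of the 4-form L_tele(ϑ) = l ∧ T^ax. -/
def LteleForm (ϑ : Fin 4 → Pt → Fin 4 → ℝ) (α β γ δ : Fin 4) (x : Pt) : ℂ :=
  lC ϑ x α * (Tax ϑ β γ δ x : ℂ) - lC ϑ x β * (Tax ϑ α γ δ x : ℂ)
    + lC ϑ x γ * (Tax ϑ α β δ x : ℂ) - lC ϑ x δ * (Tax ϑ α β γ x : ℂ)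

/-- Hodge star of a complex 4-form: ★F := (1/24) √|det g| F^{αβγδ} ε_{αβγδ}. -/
def star4C (ϑ : Fin 4 → Pt → Fin 4 → ℝ) (F : Fin 4 → Fin 4 → Fin 4 → Fin 4 → ℂ) (x : Pt) : ℂ :=
  (1/24 : ℂ) * (cofDet ϑ x : ℂ) *
    ∑ α : Fin 4, ∑ β : Fin 4, ∑ γ : Fin 4, ∑ δ : Fin 4,
      ∑ α' : Fin 4, ∑ β' : Fin 4, ∑ γ' : Fin 4, ∑ δ' : Fin 4,
        (ginv ϑ x α α' : ℂ) * (ginv ϑ x β β' : ℂ) * (ginv ϑ x γ γ' : ℂ) * (ginv ϑ x δ δ' : ℂ) *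
          F α' β' γ' δ' * (eps α β γ δ : ℂ)

/-- Hodge star of a real 4-form. -/
def star4 (ϑ : Fin 4 → Pt → Fin 4 → ℝ) (F : Fin 4 → Fin 4 → Fin 4 → Fin 4 → ℝ) (x : Pt) : ℝ :=
  (1/24 : ℝ) * cofDet ϑ x *
    ∑ α : Fin 4, ∑ β : Fin 4, ∑ γ : Fin 4, ∑ δ : Fin 4,
      ∑ α' : Fin 4, ∑ β' : Fin 4, ∑ γ' : Fin 4, ∑ δ' : Fin 4,
        ginv ϑ x α α' * ginv ϑ x β β' * ginv ϑ x γ γ' * ginv ϑ x δ δ' *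
          F α' β' γ' δ' * eps α β γ δ

/-- ★L_tele(ϑ). -/
def starLtele (ϑ : Fin 4 → Pt → Fin 4 → ℝ) (x : Pt) : ℂ :=
  star4C ϑ (fun α β γ δ => LteleForm ϑ α β γ δ x) x


/-- Pauli matrices s₀, s₁, s₂, s₃. -/
def sP : Fin 4 → Matrix (Fin 2) (Fin 2) ℂ :=
  ![!![1, 0; 0, 1], !![0, 1; 1, 0], !![0, Complex.I; -Complex.I, 0], !![1, 0; 0, -1]]

/-- The matrix E. -/
def EM : Matrix (Fin 2) (Fin 2) ℂ := !![0, 1; -1, 0]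

/-- Pauli matrices of the coframe: σ_α := ϑ^j_α s_j. -/
def sigLow (ϑ : Fin 4 → Pt → Fin 4 → ℝ) (x : Pt) (α : Fin 4) : Matrix (Fin 2) (Fin 2) ℂ :=
  ∑ j : Fin 4, (ϑ j x α : ℂ) • sP j

/-- σ^α := g^{αβ} σ_β. -/
def sigUp (ϑ : Fin 4 → Pt → Fin 4 → ℝ) (x : Pt) (α : Fin 4) : Matrix (Fin 2) (Fin 2) ℂ :=
  ∑ β : Fin 4, (ginv ϑ x α β : ℂ) • sigLow ϑ x β

/-- σ̂_β := E σ_β Eᵀ. -/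
def sigHat (ϑ : Fin 4 → Pt → Fin 4 → ℝ) (x : Pt) (β : Fin 4) : Matrix (Fin 2) (Fin 2) ℂ :=
  EM * sigLow ϑ x β * EMᵀ

/-- Covariant derivative of a spinor field:
∇_α ξ^a := ∂_α ξ^a + (1/4) (σ̂_β)^{aċ} (∂_α (σ^β)_{bċ} + Γ^β_{αγ} (σ^γ)_{bċ}) ξ^b. -/
def covSpin (ϑ : Fin 4 → Pt → Fin 4 → ℝ) (ξ : Pt → Fin 2 → ℂ) (α : Fin 4) (a : Fin 2)
    (x : Pt) : ℂ :=
  pd α (fun y => ξ y a) x + (1/4 : ℂ) * ∑ β : Fin 4, ∑ b : Fin 2, ∑ c : Fin 2,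
    sigHat ϑ x β a c *
      (pd α (fun y => sigUp ϑ y β b c) x
        + ∑ γ : Fin 4, (Chr ϑ β α γ x : ℂ) * sigUp ϑ x γ b c) * ξ x b

/-- The Weyl Lagrangian density
L_W(ξ) := (i/2)(ξ̄^ḃ (σ^α)_{aḃ} ∇_α ξ^a − ξ^a (σ^α)_{aḃ} ∇_α ξ̄^ḃ) · det(ϑ^j_α). -/
def LW (ϑ : Fin 4 → Pt → Fin 4 → ℝ) (ξ : Pt → Fin 2 → ℂ) (x : Pt) : ℂ :=
  (Complex.I / 2) *
    (∑ α : Fin 4, ∑ a : Fin 2, ∑ b : Fin 2,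
      ((starRingEnd ℂ) (ξ x b) * sigUp ϑ x α a b * covSpin ϑ ξ α a x
        - ξ x a * sigUp ϑ x α a b * (starRingEnd ℂ) (covSpin ϑ ξ α b x))) *
    (cofDet ϑ x : ℂ)

/-- p_j := (1,0,0,1). -/
def pvec : Fin 4 → ℝ := ![1, 0, 0, 1]

/-- p^j := o^{jk} p_k = (1,0,0,-1). -/
def pup : Fin 4 → ℝ := ![1, 0, 0, -1]

/-- Wedge of two 2-forms (G∧F)_{αβγδ}. -/
def w22 (G F : Fin 4 → Fin 4 → ℝ) (α β γ δ : Fin 4) : ℝ :=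
  G α β * F γ δ - G α γ * F β δ + G α δ * F β γ
    + F α β * G γ δ - F α γ * G β δ + F α δ * G β γ

/-- Triple wedge (a∧b∧c)_{αβγ} of covector fields. -/
def triple (a b c : Pt → Fin 4 → ℝ) (x : Pt) (α β γ : Fin 4) : ℝ :=
  a x α * (b x β * c x γ - b x γ * c x β)
    + a x β * (b x γ * c x α - b x α * c x γ)
    + a x γ * (b x α * c x β - b x β * c x α)

/-- Exterior derivative of a 3-form: (dT)_{αβγδ}. -/
def d3 (T : Pt → Fin 4 → Fin 4 → Fin 4 → ℝ) (α β γ δ : Fin 4) (x : Pt) : ℝ :=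
  pd α (fun y => T y β γ δ) x - pd β (fun y => T y α γ δ) x
    + pd γ (fun y => T y α β δ) x - pd δ (fun y => T y α β γ) x

/-- The 4-form p^i o_{lk} (ϑ^j∧ϑ^l)∧dϑ^k − p^j o_{lk} (ϑ^i∧ϑ^l)∧dϑ^k − 2 p_k d(ϑ^k∧ϑ^i∧ϑ^j). -/
def Gform (ϑ : Fin 4 → Pt → Fin 4 → ℝ) (i j : Fin 4) (α β γ δ : Fin 4) (x : Pt) : ℝ :=
  (∑ l : Fin 4, ∑ k : Fin 4, pup i * oM l k *
    w22 (fun a b => ϑ j x a * ϑ l x b - ϑ j x b * ϑ l x a)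
      (fun a b => dcov (ϑ k) a b x) α β γ δ)
  - (∑ l : Fin 4, ∑ k : Fin 4, pup j * oM l k *
    w22 (fun a b => ϑ i x a * ϑ l x b - ϑ i x b * ϑ l x a)
      (fun a b => dcov (ϑ k) a b x) α β γ δ)
  - 2 * ∑ k : Fin 4, pvec k * d3 (fun y a b c => triple (ϑ k) (ϑ i) (ϑ j) y a b c) α β γ δ x

/-- The field-equation scalars G^{ij}. -/
def GScal (ϑ : Fin 4 → Pt → Fin 4 → ℝ) (i j : Fin 4) (x : Pt) : ℝ :=
  star4 ϑ (fun α β γ δ => Gform ϑ i j α β γ δ x) x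

/-- Hodge star of a covector field: (★u)_{βγδ} := √|det g| u^α ε_{αβγδ}. -/
def starCov (ϑ : Fin 4 → Pt → Fin 4 → ℝ) (u : Pt → Fin 4 → ℝ) (β γ δ : Fin 4) (x : Pt) : ℝ :=
  cofDet ϑ x * ∑ α : Fin 4, (∑ μ : Fin 4, ginv ϑ x α μ * u x μ) * eps α β γ δ

/-- ‖T^ax‖² := g^{αα′} g^{ββ′} g^{γγ′} T^ax_{αβγ} T^ax_{α′β′γ′}. -/
def normTaxSq (ϑ : Fin 4 → Pt → Fin 4 → ℝ) (x : Pt) : ℝ :=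
  ∑ α : Fin 4, ∑ α' : Fin 4, ∑ β : Fin 4, ∑ β' : Fin 4, ∑ γ : Fin 4, ∑ γ' : Fin 4,
    ginv ϑ x α α' * ginv ϑ x β β' * ginv ϑ x γ γ' * Tax ϑ α β γ x * Tax ϑ α' β' γ' x

/-- Density of the quadratic teleparallel Lagrangian L(ϑ,s) := s‖T^ax‖² ∗1. -/
def quadDensity (ϑ : Fin 4 → Pt → Fin 4 → ℝ) (s : Pt → ℝ) (x : Pt) : ℝ :=
  s x * normTaxSq ϑ x * cofDet ϑ x

/-!
Under `ϑ ↦ e^h ϑ` the metric scales by `e^{2h}`, its inverse by `e^{-2h}` and `det ϑ` by `e^{4h}`.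
The axial torsion scales by `e^{2h}`: the extra term `dh ∧ ϑ^k` of `d(e^h ϑ^k)`, contracted with
`o_{jk} ϑ^j` and antisymmetrised, only sees the antisymmetric part of `g`, which is zero.
So `‖T^ax‖²` scales by `e^{-2h}`, and the factors `e^{-2h} · e^{-2h} · e^{4h}` of
`s · ‖T^ax‖² · det ϑ` cancel.
-/

theorem Matrix.inv_smul_of_ne_zero {n K : Type*} [Fintype n] [DecidableEq n] [Field K]
    {c : K} (hc : c ≠ 0) (A : Matrix n n K) : (c • A)⁻¹ = c⁻¹ • A⁻¹ := by
  by_cases hA : IsUnit A.det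
  · simpa [Units.smul_def] using Matrix.inv_smul' A (Units.mk0 c hc) hA
  · have hcA : ¬ IsUnit (c • A).det := by
      rwa [Matrix.det_smul, IsUnit.mul_iff, and_iff_right (pow_ne_zero _ hc).isUnit]
    rw [Matrix.nonsing_inv_apply_not_isUnit _ hA, Matrix.nonsing_inv_apply_not_isUnit _ hcA,
      smul_zero]

def conformalCoframe (h : Pt → ℝ) (ϑ : Fin 4 → Pt → Fin 4 → ℝ) : Fin 4 → Pt → Fin 4 → ℝ :=
  fun j y δ => Real.exp (h y) * ϑ j y δ

lemma pd_exp_mul {h u : Pt → ℝ} {x : Pt} (hh : DifferentiableAt ℝ h x)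
    (hu : DifferentiableAt ℝ u x) (γ : Fin 4) :
    pd γ (fun y => Real.exp (h y) * u y) x = Real.exp (h x) * (pd γ h x * u x + pd γ u x) := by
  simp only [pd, fderiv_fun_mul hh.exp hu, fderiv_exp hh, add_apply, smul_apply, smul_eq_mul]
  ring

lemma dcov_exp_mul {h : Pt → ℝ} {u : Pt → Fin 4 → ℝ} {x : Pt} (hh : DifferentiableAt ℝ h x)
    (hu : DifferentiableAt ℝ u x) (α β : Fin 4) :
    dcov (fun y δ => Real.exp (h y) * u y δ) α β x
      = Real.exp (h x) * (pd α h x * u x β - pd β h x * u x α + dcov u α β x) := by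
  have hu' : ∀ δ, DifferentiableAt ℝ (fun y => u y δ) x := differentiableAt_pi.1 hu
  simp only [dcov, pd_exp_mul hh (hu' _)]
  ring

lemma oM_symm (j k : Fin 4) : oM j k = oM k j := by
  unfold oM; split_ifs <;> simp_all

lemma gmat_symm (ϑ : Fin 4 → Pt → Fin 4 → ℝ) (x : Pt) (α β : Fin 4) :
    gmat ϑ x α β = gmat ϑ x β α := by
  simp only [gmat, Matrix.of_apply]
  rw [Finset.sum_comm]
  refine Finset.sum_congr rfl fun j _ => Finset.sum_congr rfl fun k _ => ?_
  rw [oM_symm]; ring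

lemma Tax_conformalCoframe {h : Pt → ℝ} {ϑ : Fin 4 → Pt → Fin 4 → ℝ} {x : Pt}
    (hh : DifferentiableAt ℝ h x) (hϑ : ∀ j, DifferentiableAt ℝ (ϑ j) x) (α β γ : Fin 4) :
    Tax (conformalCoframe h ϑ) α β γ x = Real.exp (h x) ^ 2 * Tax ϑ α β γ x := by
  have hsplit : Tax (conformalCoframe h ϑ) α β γ x = Real.exp (h x) ^ 2 * (Tax ϑ α β γ x
      + (1 / 3) * (pd α h x * (gmat ϑ x γ β - gmat ϑ x β γ)
        + pd β h x * (gmat ϑ x α γ - gmat ϑ x γ α)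
        + pd γ h x * (gmat ϑ x β α - gmat ϑ x α β))) := by
    have hd : ∀ k a b, dcov (conformalCoframe h ϑ k) a b x
        = Real.exp (h x) * (pd a h x * ϑ k x b - pd b h x * ϑ k x a + dcov (ϑ k) a b x) :=
      fun k => dcov_exp_mul hh (hϑ k)
    simp only [Tax, hd, conformalCoframe, gmat, Matrix.of_apply, Fin.sum_univ_four]
    ring
  rw [hsplit, gmat_symm ϑ x γ β, gmat_symm ϑ x α γ, gmat_symm ϑ x β α]
  ring

lemma gmat_conformalCoframe (h : Pt → ℝ) (ϑ : Fin 4 → Pt → Fin 4 → ℝ) (x : Pt) :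
    gmat (conformalCoframe h ϑ) x = Real.exp (h x) ^ 2 • gmat ϑ x := by
  ext α β
  simp only [gmat, conformalCoframe, Matrix.smul_apply, Matrix.of_apply, smul_eq_mul,
    Finset.mul_sum]
  exact Finset.sum_congr rfl fun j _ => Finset.sum_congr rfl fun k _ => by ring

lemma ginv_conformalCoframe (h : Pt → ℝ) (ϑ : Fin 4 → Pt → Fin 4 → ℝ) (x : Pt) :
    ginv (conformalCoframe h ϑ) x = (Real.exp (h x) ^ 2)⁻¹ • ginv ϑ x := by
  rw [ginv, gmat_conformalCoframe, Matrix.inv_smul_of_ne_zero (by positivity), ginv]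

lemma cofDet_conformalCoframe (h : Pt → ℝ) (ϑ : Fin 4 → Pt → Fin 4 → ℝ) (x : Pt) :
    cofDet (conformalCoframe h ϑ) x = Real.exp (h x) ^ 4 * cofDet ϑ x := by
  have : (Matrix.of fun j α => conformalCoframe h ϑ j x α)
      = Real.exp (h x) • Matrix.of fun j α => ϑ j x α := by
    ext j α; rfl
  rw [cofDet, this, Matrix.det_smul, Fintype.card_fin, cofDet]

lemma normTaxSq_eq_inv_mul {ϑ ϑ' : Fin 4 → Pt → Fin 4 → ℝ} {x : Pt} {c : ℝ} (hc : c ≠ 0)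
    (hg : ginv ϑ' x = c⁻¹ • ginv ϑ x) (hT : ∀ α β γ, Tax ϑ' α β γ x = c * Tax ϑ α β γ x) :
    normTaxSq ϑ' x = c⁻¹ * normTaxSq ϑ x := by
  simp only [normTaxSq, hg, hT, Matrix.smul_apply, smul_eq_mul, Finset.mul_sum]
  refine Finset.sum_congr rfl fun _ _ => Finset.sum_congr rfl fun _ _ =>
    Finset.sum_congr rfl fun _ _ => Finset.sum_congr rfl fun _ _ =>
    Finset.sum_congr rfl fun _ _ => Finset.sum_congr rfl fun _ _ => ?_
  field_simp

theorem quadratic_lagrangian_conformal_invariance_general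
    (U : Set Pt) (hU : IsOpen U) (ϑ : Fin 4 → Pt → Fin 4 → ℝ)
    (hreg : ∀ j, ContDiffOn ℝ 1 (ϑ j) U)
    (s : Pt → ℝ) (h : Pt → ℝ) (hh : ContDiffOn ℝ 1 h U) :
    ∀ x ∈ U,
      quadDensity (fun j y δ => Real.exp (h y) * ϑ j y δ)
        (fun y => Real.exp (-2 * h y) * s y) x = quadDensity ϑ s x := by
  intro x hx
  have hhx : DifferentiableAt ℝ h x :=
    (hh.contDiffAt (hU.mem_nhds hx)).differentiableAt one_ne_zero
  have hϑx : ∀ j, DifferentiableAt ℝ (ϑ j) x := fun j =>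
    ((hreg j).contDiffAt (hU.mem_nhds hx)).differentiableAt one_ne_zero
  have hE : Real.exp (h x) ^ 2 ≠ 0 := by positivity
  have hN : normTaxSq (conformalCoframe h ϑ) x = (Real.exp (h x) ^ 2)⁻¹ * normTaxSq ϑ x :=
    normTaxSq_eq_inv_mul hE (ginv_conformalCoframe h ϑ x) (Tax_conformalCoframe hhx hϑx)
  have hexp : Real.exp (-2 * h x) = (Real.exp (h x) ^ 2)⁻¹ := by
    rw [neg_mul, Real.exp_neg, ← Real.exp_nat_mul, Nat.cast_ofNat]
  change quadDensity (conformalCoframe h ϑ) _ x = _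
  rw [quadDensity, quadDensity, hN, cofDet_conformalCoframe, hexp]
  field_simp

/-- Conformal invariance of the quadratic teleparallel Lagrangian: replacing ϑ^j by
e^h ϑ^j and s by e^{−2h} s leaves the density s·‖T^ax‖²·det(ϑ^j_α) unchanged. -/
theorem quadratic_lagrangian_conformal_invariance
    (U : Set Pt) (hU : IsOpen U) (ϑ : Fin 4 → Pt → Fin 4 → ℝ)
    (hreg : ∀ j, ContDiffOn ℝ 1 (ϑ j) U)
    (hdet : ∀ x ∈ U, 0 < cofDet ϑ x)
    (s : Pt → ℝ) (hs : ContDiffOn ℝ 1 s U) (hspos : ∀ x ∈ U, 0 < s x)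
    (h : Pt → ℝ) (hh : ContDiffOn ℝ 1 h U) :
    ∀ x ∈ U,
      quadDensity (fun j y δ => Real.exp (h y) * ϑ j y δ)
        (fun y => Real.exp (-2 * h y) * s y) x = quadDensity ϑ s x :=
  quadratic_lagrangian_conformal_invariance_general U hU ϑ hreg s h hh
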